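/- arXiv:1810.08057 — 5 statements merged into one kernel-verified Lean document; each statement's English description precedes it below -/
import Mathlib

section
/- Let S ⊆ ℝ² be a compact set with path-connected boundary satisfying S = closure(interior(S)). If S is biconvex with respect to orthogonal unit vectors b₁, b₂, then S is a π/2-lighthouse with axes ξ, Rξ, R²ξ, R³ξ where ξ = (b₁+b₂)/‖b₁+b₂‖ and R is counter-clockwise rotation by π/2: for every x ∈ ∂S there exists i ∈ {0,1,2,3} such that the open infinite cone with vertex x, axis Rⁱξ and opening angle π/2 is contained in the complement of S. -/
noncomputable section

open Set Metric MeasureTheory Filter Real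
open scoped RealInnerProductSpace Topology symmDiff

/-- The Euclidean plane. -/
abbrev E2 : Type := EuclideanSpace ℝ (Fin 2)

/-- The line through `p` in direction `v`. -/
def lineThru (p v : E2) : Set E2 := {x | ∃ t : ℝ, x = p + t • v}

/-- `S` is biconvex with respect to the directions `b₁, b₂`: every section of `S`
along a line in direction `b₁` or `b₂` is convex. -/
def Biconvex (b₁ b₂ : E2) (S : Set E2) : Prop :=
  ∀ p : E2, Convex ℝ (lineThru p b₁ ∩ S) ∧ Convex ℝ (lineThru p b₂ ∩ S)

/-- Open quadrant-cone with vertex `y` and sides in the directions `u, v`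
(an open cone of opening angle `π/2` when `u ⊥ v`). -/
def Quadrant (y u v : E2) : Set E2 :=
  {x | ∃ s t : ℝ, 0 < s ∧ 0 < t ∧ x = y + s • u + t • v}

/-- The four open quadrant-cones at `y` with sides parallel to `b₁, b₂`
(axes `ξ, Rξ, R²ξ, R³ξ` with `ξ = (b₁+b₂)/‖b₁+b₂‖`). -/
def QuadrantCones (b₁ b₂ y : E2) : Set (Set E2) :=
  {Quadrant y b₁ b₂, Quadrant y (-b₁) b₂, Quadrant y b₁ (-b₂), Quadrant y (-b₁) (-b₂)}

/-- First canonical axis rotated counter-clockwise by `θ`. -/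
def bvec1 (θ : ℝ) : E2 := (WithLp.equiv 2 (Fin 2 → ℝ)).symm ![Real.cos θ, Real.sin θ]

/-- Second canonical axis rotated counter-clockwise by `θ`. -/
def bvec2 (θ : ℝ) : E2 := (WithLp.equiv 2 (Fin 2 → ℝ)).symm ![-Real.sin θ, Real.cos θ]

/-- `S` is `θ`-biconvex. -/
def ThetaBiconvex (θ : ℝ) (S : Set E2) : Prop := Biconvex (bvec1 θ) (bvec2 θ) S

/-- The `θ`-biconvex hull: intersection of the complements of all open quadrant-cones
(with sides parallel to the `θ`-rotated axes) that do not meet `A`. -/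
def BHull (θ : ℝ) (A : Set E2) : Set E2 :=
  ⋂₀ {T | ∃ y C, C ∈ QuadrantCones (bvec1 θ) (bvec2 θ) y ∧ C ∩ A = ∅ ∧ T = Cᶜ}

/-- Erosion `A ⊖ B(0,r)`. -/
def Erosion (A : Set E2) (r : ℝ) : Set E2 :=
  ⋃ x ∈ {x : E2 | closedBall x r ⊆ A}, closedBall x r

/-!
If `z ∉ S`, biconvexity forces the sections of `S` through `z` along `b₁` and `b₂` to lie on
one side of `z`, so for suitable signs the open rays from `z` in the directions `±b₁`, `±b₂`
miss `S`. Then `S` is covered by the open quadrant `Q` spanned by these rays and the complement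
`P` of its closure. The connected frontier of `S` lies in `Q` or in `P`; a quadrant disjoint
from the frontier is connected and leaves the bounded set `S`, so it misses `S`. Hence `Q` or
the opposite quadrant misses `S`. Having an empty quadrant is a closed condition on the vertex,
so it passes from `Sᶜ` to its closure, which contains `∂S`.
-/

theorem IsPreconnected.inter_frontier_nonempty {X : Type*} [TopologicalSpace X] {C S : Set X}
    (hC : IsPreconnected C) (hCS : (C ∩ S).Nonempty) (hCS' : (C \ S).Nonempty) :
    (C ∩ frontier S).Nonempty := by
  by_contra hCF
  have hcover : C ⊆ interior S ∪ (closure S)ᶜ := fun c hc => by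
    by_cases hcl : c ∈ closure S
    · exact .inl (by_contra fun hi => hCF ⟨c, hc, hcl, hi⟩)
    · exact .inr hcl
  rcases hC.subset_or_subset isOpen_interior isClosed_closure.isOpen_compl
    (disjoint_compl_right.mono_left interior_subset_closure) hcover with hsub | hsub
  · obtain ⟨c, hc, hcS⟩ := hCS'
    exact hcS (interior_subset (hsub hc))
  · obtain ⟨c, hc, hcS⟩ := hCS
    exact hsub hc (subset_closure hcS)

theorem convex_quadrant (y u v : E2) : Convex ℝ (Quadrant y u v) := by
  rintro _ ⟨s₁, t₁, hs₁, ht₁, rfl⟩ _ ⟨s₂, t₂, hs₂, ht₂, rfl⟩ a b ha hb hab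
  obtain rfl : b = 1 - a := by linarith
  refine ⟨a * s₁ + (1 - a) * s₂, a * t₁ + (1 - a) * t₂, ?_, ?_, by module⟩
  · rcases ha.eq_or_lt with rfl | ha <;> nlinarith
  · rcases ha.eq_or_lt with rfl | ha <;> nlinarith

theorem mem_quadrant_iff_mem_quadrant_neg {y u v w : E2} :
    w ∈ Quadrant y u v ↔ y ∈ Quadrant w (-u) (-v) := by
  constructor <;> rintro ⟨s, t, hs, ht, rfl⟩ <;> exact ⟨s, t, hs, ht, by module⟩

section Orthonormal

variable {u v : E2}

theorem Orthonormal.inner_smul_add_smul_left (h : Orthonormal ℝ ![u, v]) (s t : ℝ) :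
    ⟪s • u + t • v, u⟫ = s := by
  have hu := h.norm_eq_one 0
  have huv := h.inner_eq_zero (i := 1) (j := 0) (by decide)
  simp_all [inner_add_left, real_inner_smul_left]

theorem Orthonormal.inner_smul_add_smul_right (h : Orthonormal ℝ ![u, v]) (s t : ℝ) :
    ⟪s • u + t • v, v⟫ = t := by
  have hv := h.norm_eq_one 1
  have huv := h.inner_eq_zero (i := 0) (j := 1) (by decide)
  simp_all [inner_add_left, real_inner_smul_left]

theorem Orthonormal.eq_add_inner_smul_add_inner_smul (h : Orthonormal ℝ ![u, v]) (y w : E2) :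
    w = y + ⟪w - y, u⟫ • u + ⟪w - y, v⟫ • v := by
  let b := OrthonormalBasis.mk h
    (h.linearIndependent.span_eq_top_of_card_eq_finrank (by simp)).ge
  have hsum := b.sum_repr' (w - y)
  simp only [b, OrthonormalBasis.coe_mk, Fin.sum_univ_two, Matrix.cons_val_zero,
    Matrix.cons_val_one] at hsum
  rw [real_inner_comm (w - y) u, real_inner_comm (w - y) v] at hsum
  rw [add_assoc, hsum, add_sub_cancel]

theorem mem_quadrant_iff (h : Orthonormal ℝ ![u, v]) {y w : E2} :
    w ∈ Quadrant y u v ↔ 0 < ⟪w - y, u⟫ ∧ 0 < ⟪w - y, v⟫ := by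
  constructor
  · rintro ⟨s, t, hs, ht, rfl⟩
    rw [add_assoc, add_sub_cancel_left, h.inner_smul_add_smul_left, h.inner_smul_add_smul_right]
    exact ⟨hs, ht⟩
  · rintro ⟨hs, ht⟩
    exact ⟨_, _, hs, ht, h.eq_add_inner_smul_add_inner_smul y w⟩

theorem isOpen_quadrant (h : Orthonormal ℝ ![u, v]) (y : E2) : IsOpen (Quadrant y u v) := by
  have hQ : Quadrant y u v = {w | 0 < ⟪w - y, u⟫} ∩ {w | 0 < ⟪w - y, v⟫} :=
    ext fun _ => mem_quadrant_iff h
  rw [hQ]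
  exact (isOpen_lt continuous_const (by fun_prop)).inter (isOpen_lt continuous_const (by fun_prop))

theorem quadrant_diff_nonempty_of_isBounded (h : Orthonormal ℝ ![u, v]) {S : Set E2}
    (hS : Bornology.IsBounded S) (y : E2) : (Quadrant y u v \ S).Nonempty := by
  obtain ⟨R, hR, hSR⟩ := hS.subset_closedBall_lt 0 y
  refine ⟨y + (R + 1) • u + (1 : ℝ) • v, ⟨R + 1, 1, by linarith, one_pos, rfl⟩, fun hw => ?_⟩
  have hdist : ‖y + (R + 1) • u + (1 : ℝ) • v - y‖ ≤ R := mem_closedBall_iff_norm.1 (hSR hw)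
  have hcoord : R + 1 ≤ ‖y + (R + 1) • u + (1 : ℝ) • v - y‖ := by
    calc R + 1 = ⟪y + (R + 1) • u + (1 : ℝ) • v - y, u⟫ := by
          rw [add_assoc, add_sub_cancel_left, h.inner_smul_add_smul_left]
      _ ≤ ‖y + (R + 1) • u + (1 : ℝ) • v - y‖ * ‖u‖ := real_inner_le_norm _ _
      _ = _ := by rw [show ‖u‖ = 1 by simpa using h.norm_eq_one 0, mul_one]
  linarith

theorem quadrant_subset_compl_of_disjoint_frontier (h : Orthonormal ℝ ![u, v]) {S : Set E2}
    (hS : Bornology.IsBounded S) {y : E2} (hdisj : Disjoint (Quadrant y u v) (frontier S)) :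
    Quadrant y u v ⊆ Sᶜ := fun w hw hwS => by
  obtain ⟨p, hpQ, hpF⟩ := (convex_quadrant y u v).isPreconnected.inter_frontier_nonempty
    ⟨w, hw, hwS⟩ (quadrant_diff_nonempty_of_isBounded h hS y)
  exact disjoint_left.1 hdisj hpQ hpF

theorem isClosed_setOf_quadrant_subset_compl (h : Orthonormal ℝ ![u, v]) (S : Set E2) :
    IsClosed {z | Quadrant z u v ⊆ Sᶜ} := by
  have h' : Orthonormal ℝ ![-u, -v] :=
    h.orthonormal_of_forall_eq_or_eq_neg (by simp [Fin.forall_fin_two])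
  rw [← isOpen_compl_iff]
  convert isOpen_biUnion fun p (_ : p ∈ S) => isOpen_quadrant h' p
  ext z
  simp [subset_def, mem_quadrant_iff_mem_quadrant_neg (y := z), and_comm]

theorem subset_quadrant_union_of_notMem {S : Set E2} {z : E2} (h : Orthonormal ℝ ![u, v])
    (hz : z ∉ S) (hu : ∀ t : ℝ, 0 < t → z + t • u ∉ S) (hv : ∀ t : ℝ, 0 < t → z + t • v ∉ S) :
    S ⊆ Quadrant z u v ∪ {w | ⟪w - z, u⟫ < 0 ∨ ⟪w - z, v⟫ < 0} := by
  intro w hw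
  have hw' := h.eq_add_inner_smul_add_inner_smul z w
  rw [mem_union, mem_quadrant_iff h, mem_ofPred_eq]
  by_contra! ⟨hpos, hu0, hv0⟩
  rcases hu0.eq_or_lt with hu0 | hu0
  · rcases hv0.eq_or_lt with hv0 | hv0
    · exact hz (by rwa [hw', ← hu0, ← hv0, zero_smul, zero_smul, add_zero, add_zero] at hw)
    · exact hv _ hv0 (by rwa [hw', ← hu0, zero_smul, add_zero] at hw)
  · rw [le_antisymm (hpos hu0) hv0, zero_smul, add_zero] at hw'
    exact hu _ hu0 (hw' ▸ hw)

end Orthonormal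

theorem quadrant_mem_quadrantCones {b₁ b₂ y u v : E2} (hu : u = b₁ ∨ u = -b₁)
    (hv : v = b₂ ∨ v = -b₂) : Quadrant y u v ∈ QuadrantCones b₁ b₂ y := by
  rcases hu with rfl | rfl <;> rcases hv with rfl | rfl <;> simp [QuadrantCones]

theorem add_smul_notMem_or_add_smul_neg_notMem {S : Set E2} {z b : E2}
    (hconv : Convex ℝ (lineThru z b ∩ S)) (hz : z ∉ S) :
    (∀ t : ℝ, 0 < t → z + t • b ∉ S) ∨ (∀ t : ℝ, 0 < t → z + t • -b ∉ S) := by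
  by_contra! ⟨⟨t₁, ht₁, h₁⟩, ⟨t₂, ht₂, h₂⟩⟩
  have hmem := hconv ⟨⟨t₁, rfl⟩, h₁⟩ ⟨⟨-t₂, by module⟩, h₂⟩
    (div_pos ht₂ (add_pos ht₁ ht₂)).le (div_pos ht₁ (add_pos ht₁ ht₂)).le
    (by field_simp; ring)
  refine hz (Eq.subst (motive := (· ∈ S)) ?_ hmem.2)
  match_scalars <;> field_simp <;> ring

theorem isClosed_setOf_exists_quadrantCone_subset_compl {b₁ b₂ : E2} (h : Orthonormal ℝ ![b₁, b₂])
    (S : Set E2) : IsClosed {z | ∃ C ∈ QuadrantCones b₁ b₂ z, C ⊆ Sᶜ} := by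
  have hsigns : ∀ u v, (u = b₁ ∨ u = -b₁) → (v = b₂ ∨ v = -b₂) →
      IsClosed {z | Quadrant z u v ⊆ Sᶜ} := fun u v hu hv =>
    isClosed_setOf_quadrant_subset_compl
      (h.orthonormal_of_forall_eq_or_eq_neg (by simp [Fin.forall_fin_two, hu, hv])) S
  simp only [QuadrantCones, mem_insert_iff, mem_singleton_iff, exists_eq_or_imp, exists_eq_left,
    ofPred_or]
  exact (hsigns _ _ (.inl rfl) (.inl rfl)).union <| (hsigns _ _ (.inr rfl) (.inl rfl)).union <|
    (hsigns _ _ (.inl rfl) (.inr rfl)).union (hsigns _ _ (.inr rfl) (.inr rfl))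

theorem Biconvex.exists_quadrantCone_subset_compl_of_notMem {S : Set E2} {b₁ b₂ : E2}
    (hbc : Biconvex b₁ b₂ S) (h : Orthonormal ℝ ![b₁, b₂]) (hS : IsClosed S)
    (hSb : Bornology.IsBounded S) (hfr : IsPreconnected (frontier S)) {z : E2} (hz : z ∉ S) :
    ∃ C ∈ QuadrantCones b₁ b₂ z, C ⊆ Sᶜ := by
  obtain ⟨u, hu, hru⟩ : ∃ u, (u = b₁ ∨ u = -b₁) ∧ ∀ t : ℝ, 0 < t → z + t • u ∉ S := by
    rcases add_smul_notMem_or_add_smul_neg_notMem (hbc z).1 hz with hr | hr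
    exacts [⟨b₁, .inl rfl, hr⟩, ⟨-b₁, .inr rfl, hr⟩]
  obtain ⟨v, hv, hrv⟩ : ∃ v, (v = b₂ ∨ v = -b₂) ∧ ∀ t : ℝ, 0 < t → z + t • v ∉ S := by
    rcases add_smul_notMem_or_add_smul_neg_notMem (hbc z).2 hz with hr | hr
    exacts [⟨b₂, .inl rfl, hr⟩, ⟨-b₂, .inr rfl, hr⟩]
  have huv : Orthonormal ℝ ![u, v] :=
    h.orthonormal_of_forall_eq_or_eq_neg (by simp [Fin.forall_fin_two, hu, hv])
  have huv' : Orthonormal ℝ ![-u, -v] :=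
    huv.orthonormal_of_forall_eq_or_eq_neg (by simp [Fin.forall_fin_two])
  set P := {w | ⟪w - z, u⟫ < 0 ∨ ⟪w - z, v⟫ < 0}
  have hQP : Disjoint (Quadrant z u v) P := by
    refine disjoint_left.2 fun w hwQ hwP => ?_
    rw [mem_quadrant_iff huv] at hwQ
    rcases hwP with hw | hw <;> linarith [hwQ.1, hwQ.2]
  have hQ'P : Quadrant z (-u) (-v) ⊆ P := fun w hw => by
    rw [mem_quadrant_iff huv', inner_neg_right, inner_neg_right] at hw
    exact .inl (neg_pos.1 hw.1)
  have hP : IsOpen P := by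
    simp only [P, ofPred_or]
    exact (isOpen_lt (by fun_prop) continuous_const).union
      (isOpen_lt (by fun_prop) continuous_const)
  have hcover : frontier S ⊆ Quadrant z u v ∪ P :=
    hS.frontier_subset.trans (subset_quadrant_union_of_notMem huv hz hru hrv)
  rcases hfr.subset_or_subset (isOpen_quadrant huv z) hP hQP hcover with hF | hF
  · refine ⟨Quadrant z (-u) (-v), quadrant_mem_quadrantCones ?_ ?_,
      quadrant_subset_compl_of_disjoint_frontier huv' hSb
        ((hQP.symm.mono_left hQ'P).mono_right hF)⟩
    · rcases hu with rfl | rfl <;> simp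
    · rcases hv with rfl | rfl <;> simp
  · exact ⟨Quadrant z u v, quadrant_mem_quadrantCones hu hv,
      quadrant_subset_compl_of_disjoint_frontier huv hSb (hQP.mono_right hF)⟩

theorem biconvex_lighthouse_general (S : Set E2) (hScomp : IsCompact S)
    (hbd : IsPathConnected (frontier S))
    (b₁ b₂ : E2) (hb₁ : ‖b₁‖ = 1) (hb₂ : ‖b₂‖ = 1) (horth : ⟪b₁, b₂⟫ = 0)
    (hbc : Biconvex b₁ b₂ S) :
    ∀ x ∈ frontier S, ∃ C ∈ QuadrantCones b₁ b₂ x, C ⊆ Sᶜ := by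
  have h : Orthonormal ℝ ![b₁, b₂] := by simp [hb₁, hb₂, horth]
  intro x hx
  rw [← frontier_compl] at hx
  refine closure_minimal (fun z hz => ?_) (isClosed_setOf_exists_quadrantCone_subset_compl h S)
    (frontier_subset_closure hx)
  exact hbc.exists_quadrantCone_subset_compl_of_notMem h hScomp.isClosed hScomp.isBounded
    hbd.isConnected.isPreconnected hz

/-- a compact regular biconvex set is a `π/2`-lighthouse with the
four diagonal axes: every boundary point has an empty open quadrant-cone. -/
theorem biconvex_lighthouse (S : Set E2) (hScomp : IsCompact S)
    (hbd : IsPathConnected (frontier S)) (hreg : S = closure (interior S))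
    (b₁ b₂ : E2) (hb₁ : ‖b₁‖ = 1) (hb₂ : ‖b₂‖ = 1) (horth : ⟪b₁, b₂⟫ = 0)
    (hbc : Biconvex b₁ b₂ S) :
    ∀ x ∈ frontier S, ∃ C ∈ QuadrantCones b₁ b₂ x, C ⊆ Sᶜ :=
  biconvex_lighthouse_general S hScomp hbd b₁ b₂ hb₁ hb₂ horth hbc
end
end

section
/- Let S ⊆ ℝ² be a compact set with path-connected boundary satisfying S = closure(interior(S)). If S is a π/2-lighthouse with axes ξ, Rξ, R²ξ, R³ξ (ξ = (b₁+b₂)/‖b₁+b₂‖, R a π/2-rotation), i.e., every boundary point admits an empty open quadrant-cone with one of these four axes, then S is biconvex with respect to b₁, b₂. -/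
noncomputable section

open Set Metric MeasureTheory Filter Real
open scoped RealInnerProductSpace Topology symmDiff

/-!
Suppose a line in direction `b₁` meets `S` in two points with a point `z ∉ S` between them.
Frontier points `a`, `b` of `S` on the line on either side of `z` are joined by a path in `∂S`,
which crosses the perpendicular through `z` at a point of `S` off the line; by regularity there is
an interior point `q` of `S` over the gap, on one side of the line, whose foot on the line is not in
`S`. Walking from `q` towards its foot we meet a frontier point at which all four open quadrants
meet `S`: the two facing away from the line contain points near `q`, the other two contain `a`
and `b`. This contradicts the lighthouse property.
-/

section Frame

variable {E : Type*} [NormedAddCommGroup E] [InnerProductSpace ℝ E] {u v : E}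

theorem orthonormal_pair_iff :
    Orthonormal ℝ ![u, v] ↔ ‖u‖ = 1 ∧ ‖v‖ = 1 ∧ ⟪u, v⟫ = 0 := by
  simp [Orthonormal, Fin.forall_fin_two, Pairwise, real_inner_comm u v, and_assoc]

theorem Orthonormal.swap_pair (h : Orthonormal ℝ ![u, v]) : Orthonormal ℝ ![v, u] := by
  rw [orthonormal_pair_iff] at h ⊢
  exact ⟨h.2.1, h.1, by rw [real_inner_comm, h.2.2]⟩

theorem Orthonormal.neg_right_pair (h : Orthonormal ℝ ![u, v]) : Orthonormal ℝ ![u, -v] := by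
  rw [orthonormal_pair_iff] at h ⊢
  simpa using h

theorem Orthonormal.neg_left_pair (h : Orthonormal ℝ ![u, v]) : Orthonormal ℝ ![-u, v] :=
  h.swap_pair.neg_right_pair.swap_pair

theorem exists_pos_add_smul_mem {s : Set E} {x : E} (hx : x ∈ interior s) (w : E) :
    ∃ δ : ℝ, 0 < δ ∧ x + δ • w ∈ s := by
  have hcont : Tendsto (fun t : ℝ => x + t • w) (𝓝 0) (𝓝 x) := by
    simpa using (by fun_prop : Continuous fun t : ℝ => x + t • w).tendsto 0
  have hev : ∀ᶠ t in 𝓝[>] (0 : ℝ), x + t • w ∈ s :=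
    nhdsWithin_le_nhds (hcont (mem_interior_iff_mem_nhds.1 hx))
  exact (hev.and self_mem_nhdsWithin).exists.imp fun t ht => ⟨ht.2, ht.1⟩

end Frame

theorem Continuous.exists_mem_uIcc_mem_frontier {X : Type*} [TopologicalSpace X] {g : ℝ → X}
    (hg : Continuous g) {S : Set X} {t₁ t₂ : ℝ} (h₁ : g t₁ ∈ S) (h₂ : g t₂ ∉ S) :
    ∃ t ∈ uIcc t₁ t₂, g t ∈ frontier S := by
  by_contra! h
  have hsub : g '' uIcc t₁ t₂ ⊆ interior S ∪ (closure S)ᶜ := by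
    rintro _ ⟨t, ht, rfl⟩
    have := h t ht
    rw [frontier, Set.mem_sdiff, not_and_not_right] at this
    by_cases hc : g t ∈ closure S
    · exact Or.inl (this hc)
    · exact Or.inr hc
  rcases (isPreconnected_uIcc.image g hg.continuousOn).subset_or_subset isOpen_interior
    isClosed_closure.isOpen_compl (disjoint_compl_right.mono_right
      (compl_subset_compl.2 interior_subset_closure)) hsub with hS | hS
  · exact h₂ (interior_subset (hS (mem_image_of_mem g right_mem_uIcc)))
  · exact hS (mem_image_of_mem g left_mem_uIcc) (subset_closure h₁)

section PlaneFrame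

variable {u v : E2}

theorem Orthonormal.inner_smul_add_inner_smul (h : Orthonormal ℝ ![u, v]) (x : E2) :
    ⟪u, x⟫ • u + ⟪v, x⟫ • v = x := by
  have hcard : Fintype.card (Fin 2) = Module.finrank ℝ E2 := by simp
  set b := basisOfOrthonormalOfCardEqFinrank h hcard
  have hb : ⇑b = ![u, v] := coe_basisOfOrthonormalOfCardEqFinrank h hcard
  have := (b.toOrthonormalBasis (hb ▸ h)).sum_repr' x
  rwa [Fin.sum_univ_two, b.coe_toOrthonormalBasis, hb] at this

theorem Orthonormal.eq_of_inner_eq (h : Orthonormal ℝ ![u, v]) {x y : E2}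
    (hu : ⟪u, x⟫ = ⟪u, y⟫) (hv : ⟪v, x⟫ = ⟪v, y⟫) : x = y := by
  rw [← h.inner_smul_add_inner_smul x, hu, hv, h.inner_smul_add_inner_smul]

theorem Orthonormal.mem_quadrant_of_inner_lt (h : Orthonormal ℝ ![u, v]) {x z : E2}
    (hu : ⟪u, z⟫ < ⟪u, x⟫) (hv : ⟪v, z⟫ < ⟪v, x⟫) : x ∈ Quadrant z u v := by
  refine ⟨⟪u, x - z⟫, ⟪v, x - z⟫, by simpa [inner_sub_right], by simpa [inner_sub_right], ?_⟩
  rw [add_assoc, h.inner_smul_add_inner_smul, add_sub_cancel]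

theorem Orthonormal.exists_mem_interior_over_gap (hf : Orthonormal ℝ ![u, v]) {S : Set E2}
    (hbd : IsPathConnected (frontier S)) (hreg : S = closure (interior S)) {p : E2}
    {s₁ t s₂ : ℝ} (ha : p + s₁ • u ∈ frontier S) (hb : p + s₂ • u ∈ frontier S)
    (hs₁ : s₁ < t) (hs₂ : t < s₂) (hz : p + t • u ∉ S) :
    ∃ q ∈ interior S, p + (⟪u, q⟫ - ⟪u, p⟫) • u ∉ S ∧ ⟪v, q⟫ ≠ ⟪v, p⟫ ∧
      ⟪u, p⟫ + s₁ < ⟪u, q⟫ ∧ ⟪u, q⟫ < ⟪u, p⟫ + s₂ := by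
  have hS : IsClosed S := hreg ▸ isClosed_closure
  obtain ⟨hu, -, huv⟩ := orthonormal_pair_iff.1 hf
  have hvu : ⟪v, u⟫ = 0 := by rw [real_inner_comm, huv]
  obtain ⟨γ, hγ⟩ := hbd.joinedIn _ ha _ hb
  obtain ⟨τ, hτ⟩ : ⟪u, p⟫ + t ∈ range fun τ => ⟪u, γ τ⟫ := by
    refine intermediate_value_univ 0 1 (by fun_prop) ⟨?_, ?_⟩ <;>
      simp [inner_add_right, real_inner_smul_right, hu] <;> linarith
  have hw : γ τ ∈ S := hS.frontier_subset (hγ τ)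
  have hwv : ⟪v, γ τ⟫ ≠ ⟪v, p⟫ := by
    intro hv
    have : γ τ = p + t • u := by
      apply hf.eq_of_inner_eq <;> simp [inner_add_right, real_inner_smul_right, hu, hvu, hτ, hv]
    exact hz (this ▸ hw)
  set U : Set E2 := {x | p + (⟪u, x⟫ - ⟪u, p⟫) • u ∉ S ∧ ⟪v, x⟫ ≠ ⟪v, p⟫ ∧
    ⟪u, p⟫ + s₁ < ⟪u, x⟫ ∧ ⟪u, x⟫ < ⟪u, p⟫ + s₂}
  have hU : IsOpen U := by
    simp only [U, ofPred_and]
    exact (hS.isOpen_compl.preimage (by fun_prop)).inter ((isOpen_ne_fun (by fun_prop)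
      continuous_const).inter ((isOpen_lt continuous_const (by fun_prop)).inter
      (isOpen_lt (by fun_prop) continuous_const)))
  have hwU : γ τ ∈ U := by
    refine ⟨by simpa [hτ] using hz, hwv, ?_, ?_⟩ <;> linarith
  obtain ⟨q, hqU, hq⟩ := mem_closure_iff.1 (hreg ▸ hw : γ τ ∈ closure (interior S)) U hU hwU
  exact ⟨q, hq, hqU⟩

end PlaneFrame

theorem quadrant_comm (y u v : E2) : Quadrant y u v = Quadrant y v u := by
  ext x
  constructor <;> rintro ⟨s, t, hs, ht, rfl⟩ <;> exact ⟨t, s, ht, hs, by abel⟩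

theorem quadrantCones_comm (u v y : E2) : QuadrantCones u v y = QuadrantCones v u y := by
  simp only [QuadrantCones, quadrant_comm y u, quadrant_comm y (-u)]
  grind

theorem quadrantCones_neg_right (u v y : E2) : QuadrantCones u (-v) y = QuadrantCones u v y := by
  simp only [QuadrantCones, neg_neg]
  grind

def IsLighthouse (u v : E2) (S : Set E2) : Prop :=
  ∀ x ∈ frontier S, ∃ C ∈ QuadrantCones u v x, C ∩ S = ∅

namespace IsLighthouse

variable {u v : E2} {S : Set E2}

theorem swap (h : IsLighthouse u v S) : IsLighthouse v u S := by
  simpa only [IsLighthouse, quadrantCones_comm v u] using h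

theorem neg_right (h : IsLighthouse u v S) : IsLighthouse u (-v) S := by
  simpa only [IsLighthouse, quadrantCones_neg_right] using h

theorem notMem_interior_above_gap (hf : Orthonormal ℝ ![u, v]) (hS : IsClosed S)
    (hlh : IsLighthouse u v S) {a b p q : E2} (ha : a ∈ S) (hb : b ∈ S) (hp : p ∉ S)
    (hpq : ⟪u, p⟫ = ⟪u, q⟫) (hpq' : ⟪v, p⟫ < ⟪v, q⟫) (haq : ⟪u, a⟫ < ⟪u, q⟫)
    (hqb : ⟪u, q⟫ < ⟪u, b⟫) (hap : ⟪v, a⟫ ≤ ⟪v, p⟫) (hbp : ⟪v, b⟫ ≤ ⟪v, p⟫) :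
    q ∉ interior S := by
  intro hq
  obtain ⟨hu, hv, huv⟩ := orthonormal_pair_iff.1 hf
  have hvu : ⟪v, u⟫ = 0 := by rw [real_inner_comm, huv]
  set d := ⟪v, q⟫ - ⟪v, p⟫
  have hqp : q - d • v = p :=
    hf.eq_of_inner_eq (by simp [inner_sub_right, real_inner_smul_right, huv, hpq])
      (by simp [inner_sub_right, real_inner_smul_right, hv, d])
  have hdown : Continuous fun s : ℝ => q - s • v := by fun_prop
  obtain ⟨s, hs, hz⟩ := hdown.exists_mem_uIcc_mem_frontier (t₁ := 0) (t₂ := d)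
    (by simpa using interior_subset hq) (by simpa [hqp])
  rw [uIcc_of_le (by linarith)] at hs
  have hs₀ : 0 < s := by
    refine hs.1.lt_of_ne' ?_
    rintro rfl
    exact disjoint_interior_frontier.notMem_of_mem_left hq (by simpa using hz)
  have hsd : s < d := by
    refine hs.2.lt_of_ne ?_
    rintro rfl
    exact hp (hqp ▸ hS.frontier_subset hz)
  obtain ⟨δ₁, hδ₁, hq₁⟩ := exists_pos_add_smul_mem hq u
  obtain ⟨δ₂, hδ₂, hq₂⟩ := exists_pos_add_smul_mem hq (-u)
  have hNE : q + δ₁ • u ∈ Quadrant (q - s • v) u v := by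
    apply hf.mem_quadrant_of_inner_lt <;>
      simp [inner_sub_right, inner_add_right, real_inner_smul_right, hu, hv, huv, hvu] <;>
      linarith
  have hNW : q + δ₂ • (-u) ∈ Quadrant (q - s • v) (-u) v := by
    apply hf.neg_left_pair.mem_quadrant_of_inner_lt <;>
      simp [inner_sub_right, inner_add_right, real_inner_smul_right, hu, hv, huv, hvu] <;>
      linarith
  have hSE : b ∈ Quadrant (q - s • v) u (-v) := by
    apply hf.neg_right_pair.mem_quadrant_of_inner_lt <;>
      simp [inner_sub_right, real_inner_smul_right, hv, huv] <;> linarith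
  have hSW : a ∈ Quadrant (q - s • v) (-u) (-v) := by
    apply hf.neg_left_pair.neg_right_pair.mem_quadrant_of_inner_lt <;>
      simp [inner_sub_right, real_inner_smul_right, hv, huv] <;> linarith
  obtain ⟨C, hC, hCS⟩ := hlh _ hz
  simp only [QuadrantCones, mem_insert_iff, mem_singleton_iff] at hC
  rcases hC with rfl | rfl | rfl | rfl
  exacts [hCS.subset ⟨hNE, hq₁⟩, hCS.subset ⟨hNW, hq₂⟩, hCS.subset ⟨hSE, hb⟩,
    hCS.subset ⟨hSW, ha⟩]

theorem add_smul_mem_of_lt_of_lt (hf : Orthonormal ℝ ![u, v])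
    (hbd : IsPathConnected (frontier S)) (hreg : S = closure (interior S))
    (hlh : IsLighthouse u v S) {p : E2} {t₁ t t₂ : ℝ} (h₁ : p + t₁ • u ∈ S)
    (h₂ : p + t₂ • u ∈ S) (ht₁ : t₁ < t) (ht₂ : t < t₂) : p + t • u ∈ S := by
  have hS : IsClosed S := hreg ▸ isClosed_closure
  obtain ⟨hu, -, huv⟩ := orthonormal_pair_iff.1 hf
  have hvu : ⟪v, u⟫ = 0 := by rw [real_inner_comm, huv]
  by_contra hz
  have hline : Continuous fun s : ℝ => p + s • u := by fun_prop
  obtain ⟨s₁, hs₁, ha⟩ := hline.exists_mem_uIcc_mem_frontier h₁ hz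
  obtain ⟨s₂, hs₂, hb⟩ := hline.exists_mem_uIcc_mem_frontier h₂ hz
  rw [uIcc_of_le ht₁.le] at hs₁
  rw [uIcc_of_ge ht₂.le] at hs₂
  have hs₁t : s₁ < t := hs₁.2.lt_of_ne (by rintro rfl; exact hz (hS.frontier_subset ha))
  have hts₂ : t < s₂ := hs₂.1.lt_of_ne' (by rintro rfl; exact hz (hS.frontier_subset hb))
  obtain ⟨q, hq, hfoot, hqv, hsq, hqs⟩ :=
    hf.exists_mem_interior_over_gap hbd hreg ha hb hs₁t hts₂ hz
  have ha' : p + s₁ • u ∈ S := hS.frontier_subset ha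
  have hb' : p + s₂ • u ∈ S := hS.frontier_subset hb
  rcases hqv.lt_or_gt with hlt | hgt
  · refine hlh.neg_right.notMem_interior_above_gap hf.neg_right_pair hS ha' hb' hfoot
      ?_ ?_ ?_ ?_ ?_ ?_ hq <;>
      simp [inner_add_right, real_inner_smul_right, hu, hvu] <;> linarith
  · refine hlh.notMem_interior_above_gap hf hS ha' hb' hfoot ?_ ?_ ?_ ?_ ?_ ?_ hq <;>
      simp [inner_add_right, real_inner_smul_right, hu, hvu] <;> linarith

theorem convex_lineThru_inter (hf : Orthonormal ℝ ![u, v]) (hbd : IsPathConnected (frontier S))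
    (hreg : S = closure (interior S)) (hlh : IsLighthouse u v S) (p : E2) :
    Convex ℝ (lineThru p u ∩ S) := by
  have himage :
      lineThru p u ∩ S = AffineMap.lineMap (k := ℝ) p (p + u) '' {t | p + t • u ∈ S} := by
    ext x
    simp only [lineThru, mem_inter_iff, mem_ofPred_eq, mem_image, AffineMap.lineMap_apply_module',
      add_sub_cancel_left, add_comm _ p]
    constructor
    · rintro ⟨⟨t, rfl⟩, hx⟩
      exact ⟨t, hx, rfl⟩
    · rintro ⟨t, ht, rfl⟩
      exact ⟨⟨t, rfl⟩, ht⟩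
  rw [himage]
  refine Convex.affine_image _ (ordConnected_of_Ioo ?_).convex
  intro t₁ h₁ t₂ h₂ _ t ht
  exact hlh.add_smul_mem_of_lt_of_lt hf hbd hreg h₁ h₂ ht.1 ht.2

end IsLighthouse

theorem lighthouse_biconvex_general (S : Set E2)
    (hbd : IsPathConnected (frontier S)) (hreg : S = closure (interior S))
    (b₁ b₂ : E2) (hb₁ : ‖b₁‖ = 1) (hb₂ : ‖b₂‖ = 1) (horth : ⟪b₁, b₂⟫ = 0)
    (hlh : ∀ x ∈ frontier S, ∃ C ∈ QuadrantCones b₁ b₂ x, C ∩ S = ∅) :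
    Biconvex b₁ b₂ S := by
  have hf : Orthonormal ℝ ![b₁, b₂] := orthonormal_pair_iff.2 ⟨hb₁, hb₂, horth⟩
  have hlh' : IsLighthouse b₁ b₂ S := hlh
  exact fun p => ⟨hlh'.convex_lineThru_inter hf hbd hreg p,
    hlh'.swap.convex_lineThru_inter hf.swap_pair hbd hreg p⟩

/-- a compact regular set which is a `π/2`-lighthouse with the
four diagonal axes (every boundary point has an empty open quadrant-cone with
sides parallel to `b₁, b₂`) is biconvex wrt `b₁, b₂`. -/
theorem lighthouse_biconvex (S : Set E2) (hScomp : IsCompact S)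
    (hbd : IsPathConnected (frontier S)) (hreg : S = closure (interior S))
    (b₁ b₂ : E2) (hb₁ : ‖b₁‖ = 1) (hb₂ : ‖b₂‖ = 1) (horth : ⟪b₁, b₂⟫ = 0)
    (hlh : ∀ x ∈ frontier S, ∃ C ∈ QuadrantCones b₁ b₂ x, C ∩ S = ∅) :
    Biconvex b₁ b₂ S :=
  lighthouse_biconvex_general S hbd hreg b₁ b₂ hb₁ hb₂ horth hlh
end
end

section
/- Let S ⊆ ℝ² be a compact set with path-connected boundary satisfying S = closure(interior(S)), and suppose S is θ-biconvex. Then 𝔹_θ(S) = S, i.e., S coincides with its θ-biconvex hull. -/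
noncomputable section

open Set Metric MeasureTheory Filter Real
open scoped RealInnerProductSpace Topology symmDiff

/-!
Suppose `x ∉ S` lies in the hull. Every open quadrant containing `x` meets `S`, so by compactness
`S` meets each of the four closed quadrants at `x`. By biconvexity each of the two axis lines
through `x` meets `S` on one side of `x` only; orient the axes `u, v` so that both sections lie on
the negative side. Then `S` meets the closed quadrant `Q` spanned by `u, v` only in its interior,
and it also meets the opposite quadrant. Both closed quadrants are convex and contain `x ∉ S`, so
each contains a frontier point of `S`: the frontier meets the interior of `Q` and its complement
but not the boundary of `Q`, which contradicts its connectedness.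
-/

lemma Set.OrdConnected.forall_lt_or_forall_gt {α : Type*} [LinearOrder α] {s : Set α}
    (hs : s.OrdConnected) {a : α} (ha : a ∉ s) : (∀ t ∈ s, a < t) ∨ (∀ t ∈ s, t < a) := by
  by_contra h
  push Not at h
  obtain ⟨⟨t₁, ht₁, h₁⟩, ⟨t₂, ht₂, h₂⟩⟩ := h
  exact ha (hs.out ht₁ ht₂ ⟨h₁, h₂⟩)

lemma IsPreconnected.inter_frontier_nonempty_s8 {X : Type*} [TopologicalSpace X] {K S : Set X}
    (hK : IsPreconnected K) (hS : IsClosed S) (hin : (K ∩ S).Nonempty) (hout : (K \ S).Nonempty) :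
    (K ∩ frontier S).Nonempty := by
  by_contra hK_fr
  rw [not_nonempty_iff_eq_empty] at hK_fr
  have hK_out : K ⊆ Sᶜ := by
    refine hK.subset_of_closure_inter_subset hS.isOpen_compl hout fun z ⟨hz_cl, hzK⟩ hzS => ?_
    have hz_fr : z ∈ frontier S := by
      rw [frontier_eq_closure_inter_closure, hS.closure_eq]
      exact ⟨hzS, hz_cl⟩
    exact (hK_fr ▸ ⟨hzK, hz_fr⟩ : z ∈ (∅ : Set X))
  obtain ⟨z, hzK, hzS⟩ := hin
  exact hK_out hzK hzS

lemma IsCompact.exists_nonneg_of_forall_exists_neg_lt {X : Type*} [TopologicalSpace X]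
    {s : Set X} (hs : IsCompact s) {f : X → ℝ} (hf : ContinuousOn f s)
    (h : ∀ ε > 0, ∃ z ∈ s, -ε < f z) : ∃ z ∈ s, 0 ≤ f z := by
  obtain ⟨z₁, hz₁, -⟩ := h 1 one_pos
  obtain ⟨z₀, hz₀, hmax⟩ := hs.exists_isMaxOn ⟨z₁, hz₁⟩ hf
  refine ⟨z₀, hz₀, not_lt.mp fun hneg => ?_⟩
  obtain ⟨z, hz, hlt⟩ := h (-f z₀) (neg_pos.mpr hneg)
  have hle : f z ≤ f z₀ := hmax hz
  linarith

section Quadrants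

variable {F : Type*} [NormedAddCommGroup F] [InnerProductSpace ℝ F]

def closedQuadrant (x u v : F) : Set F := {z | 0 ≤ ⟪z - x, u⟫ ∧ 0 ≤ ⟪z - x, v⟫}

def openQuadrant (x u v : F) : Set F := {z | 0 < ⟪z - x, u⟫ ∧ 0 < ⟪z - x, v⟫}

lemma isClosed_closedQuadrant (x u v : F) : IsClosed (closedQuadrant x u v) := by
  have hc (w : F) : Continuous fun z : F => ⟪z - x, w⟫ :=
    (continuous_sub_right x).inner continuous_const
  exact (isClosed_le continuous_const (hc u)).inter (isClosed_le continuous_const (hc v))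

lemma isOpen_openQuadrant (x u v : F) : IsOpen (openQuadrant x u v) := by
  have hc (w : F) : Continuous fun z : F => ⟪z - x, w⟫ :=
    (continuous_sub_right x).inner continuous_const
  exact (isOpen_lt continuous_const (hc u)).inter (isOpen_lt continuous_const (hc v))

lemma convex_closedQuadrant (x u v : F) : Convex ℝ (closedQuadrant x u v) := by
  have hhalf (w : F) : Convex ℝ {z : F | 0 ≤ ⟪z - x, w⟫} := by
    simpa only [inner_sub_left, sub_nonneg] using convex_halfSpace_ge
      ⟨fun _ _ => inner_add_left _ _ w, fun c z => real_inner_smul_left z w c⟩ ⟪x, w⟫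
  exact (hhalf u).inter (hhalf v)

lemma closure_openQuadrant_subset (x u v : F) :
    closure (openQuadrant x u v) ⊆ closedQuadrant x u v :=
  closure_minimal (fun _ hz => ⟨hz.1.le, hz.2.le⟩) (isClosed_closedQuadrant x u v)

lemma self_mem_closedQuadrant (x u v : F) : x ∈ closedQuadrant x u v := by
  simp [closedQuadrant]

lemma not_isPreconnected_frontier {S : Set F} (hS : IsClosed S) {x u v : F}
    (hSQ : S ∩ closedQuadrant x u v ⊆ openQuadrant x u v)
    (hpos : (S ∩ closedQuadrant x u v).Nonempty)
    (hneg : (S ∩ closedQuadrant x (-u) (-v)).Nonempty) :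
    ¬IsPreconnected (frontier S) := by
  intro hfr
  have hxS : x ∉ S := fun hx => by
    simpa [openQuadrant] using hSQ ⟨hx, self_mem_closedQuadrant x u v⟩
  have hmeets : ∀ u v : F, (S ∩ closedQuadrant x u v).Nonempty →
      (closedQuadrant x u v ∩ frontier S).Nonempty := fun u v h =>
    (convex_closedQuadrant x u v).isPreconnected.inter_frontier_nonempty_s8 hS
      (by rwa [inter_comm]) ⟨x, self_mem_closedQuadrant x u v, hxS⟩
  obtain ⟨a, haQ, haS⟩ := hmeets u v hpos
  obtain ⟨d, hdQ, hdS⟩ := hmeets (-u) (-v) hneg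
  have hfr_sub : frontier S ⊆ openQuadrant x u v :=
    hfr.subset_of_closure_inter_subset (isOpen_openQuadrant x u v)
      ⟨a, haS, hSQ ⟨hS.frontier_subset haS, haQ⟩⟩
      fun z ⟨hz_cl, hzS⟩ => hSQ ⟨hS.frontier_subset hzS, closure_openQuadrant_subset x u v hz_cl⟩
  have hd := hfr_sub hdS
  simp only [closedQuadrant, openQuadrant, inner_neg_right] at hdQ hd
  linarith [hdQ.1, hd.1]

end Quadrants

lemma inner_bvec1_self (θ : ℝ) : ⟪bvec1 θ, bvec1 θ⟫ = 1 := by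
  simp [-inner_self_eq_norm_sq_to_K, bvec1, PiLp.inner_apply, Fin.sum_univ_two,
    WithLp.equiv_symm_apply]
  rw [← Real.sin_sq_add_cos_sq θ]; ring

lemma inner_bvec2_self (θ : ℝ) : ⟪bvec2 θ, bvec2 θ⟫ = 1 := by
  simp [-inner_self_eq_norm_sq_to_K, bvec2, PiLp.inner_apply, Fin.sum_univ_two,
    WithLp.equiv_symm_apply]
  rw [← Real.sin_sq_add_cos_sq θ]; ring

lemma inner_bvec1_bvec2 (θ : ℝ) : ⟪bvec1 θ, bvec2 θ⟫ = 0 := by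
  simp [bvec1, bvec2, PiLp.inner_apply, Fin.sum_univ_two, WithLp.equiv_symm_apply]
  ring

lemma eq_inner_bvec1_smul_add_inner_bvec2_smul (θ : ℝ) (w : E2) :
    w = ⟪w, bvec1 θ⟫ • bvec1 θ + ⟪w, bvec2 θ⟫ • bvec2 θ := by
  have h := Real.sin_sq_add_cos_sq θ
  ext i
  fin_cases i
  · simp [bvec1, bvec2, PiLp.inner_apply, Fin.sum_univ_two, WithLp.equiv_symm_apply]
    linear_combination (-(w 0)) * h
  · simp [bvec1, bvec2, PiLp.inner_apply, Fin.sum_univ_two, WithLp.equiv_symm_apply]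
    linear_combination (-(w 1)) * h

lemma convex_setOf_add_smul_mem {S : Set E2} {x b : E2} (hS : Convex ℝ (lineThru x b ∩ S)) :
    Convex ℝ {t : ℝ | x + t • b ∈ S} := by
  intro t₁ h₁ t₂ h₂ a c ha hc hac
  show x + (a • t₁ + c • t₂) • b ∈ S
  convert (hS ⟨⟨t₁, rfl⟩, h₁⟩ ⟨⟨t₂, rfl⟩, h₂⟩ ha hc hac).2 using 1
  rw [show a • (x + t₁ • b) + c • (x + t₂ • b) = (a + c) • x + (a • t₁ + c • t₂) • b by module,
    hac, one_smul]

lemma exists_sign_forall_neg_of_notMem {S : Set E2} {x b : E2}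
    (hS : Convex ℝ (lineThru x b ∩ S)) (hx : x ∉ S) :
    ∃ u, (u = b ∨ u = -b) ∧ ∀ t : ℝ, x + t • u ∈ S → t < 0 := by
  have h0 : (0 : ℝ) ∉ {t : ℝ | x + t • b ∈ S} := by simpa using hx
  rcases (convex_setOf_add_smul_mem hS).ordConnected.forall_lt_or_forall_gt h0 with hpos | hneg
  · refine ⟨-b, Or.inr rfl, fun t ht => ?_⟩
    have := hpos (-t) (by simpa using ht)
    linarith
  · exact ⟨b, Or.inl rfl, hneg⟩

def IsAxisPair (θ : ℝ) (u v : E2) : Prop :=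
  (u = bvec1 θ ∨ u = -bvec1 θ) ∧ (v = bvec2 θ ∨ v = -bvec2 θ)

namespace IsAxisPair

variable {θ : ℝ} {u v : E2}

lemma neg (h : IsAxisPair θ u v) : IsAxisPair θ (-u) (-v) := by
  rcases h with ⟨rfl | rfl, rfl | rfl⟩ <;> simp [IsAxisPair]

lemma quadrant_mem_quadrantCones (h : IsAxisPair θ u v) (y : E2) :
    Quadrant y u v ∈ QuadrantCones (bvec1 θ) (bvec2 θ) y := by
  rcases h with ⟨rfl | rfl, rfl | rfl⟩ <;> simp [QuadrantCones]

lemma inner_smul_add_smul_left (h : IsAxisPair θ u v) (a b : ℝ) : ⟪a • u + b • v, u⟫ = a := by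
  rcases h with ⟨rfl | rfl, rfl | rfl⟩ <;>
    simp [-inner_self_eq_norm_sq_to_K, inner_add_left, real_inner_smul_left, inner_bvec1_self,
      real_inner_comm (bvec1 θ) (bvec2 θ), inner_bvec1_bvec2]

lemma inner_smul_add_smul_right (h : IsAxisPair θ u v) (a b : ℝ) : ⟪a • u + b • v, v⟫ = b := by
  rcases h with ⟨rfl | rfl, rfl | rfl⟩ <;>
    simp [-inner_self_eq_norm_sq_to_K, inner_add_left, real_inner_smul_left, inner_bvec2_self,
      inner_bvec1_bvec2]

lemma eq_inner_smul_add_inner_smul (h : IsAxisPair θ u v) (w : E2) :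
    w = ⟪w, u⟫ • u + ⟪w, v⟫ • v := by
  rcases h with ⟨rfl | rfl, rfl | rfl⟩ <;>
    simpa [inner_neg_right] using eq_inner_bvec1_smul_add_inner_bvec2_smul θ w

lemma inter_closedQuadrant_nonempty (h : IsAxisPair θ u v) {S : Set E2} (hS : IsCompact S)
    {x : E2} (hx : x ∈ BHull θ S) :
    (S ∩ closedQuadrant x u v).Nonempty := by
  have hnear : ∀ ε > 0, ∃ z ∈ S, -ε < min ⟪z - x, u⟫ ⟪z - x, v⟫ := by
    intro ε hε
    have hxC : x ∈ Quadrant (x - ε • u - ε • v) u v := ⟨ε, ε, hε, hε, by abel⟩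
    obtain ⟨z, ⟨s, t, hs, ht, rfl⟩, hzS⟩ : (Quadrant (x - ε • u - ε • v) u v ∩ S).Nonempty := by
      rw [nonempty_iff_ne_empty]
      exact fun hempty => hx _ ⟨_, _, h.quadrant_mem_quadrantCones _, hempty, rfl⟩ hxC
    have hzx : x - ε • u - ε • v + s • u + t • v - x = (s - ε) • u + (t - ε) • v := by module
    refine ⟨_, hzS, lt_min ?_ ?_⟩
    · rw [hzx, h.inner_smul_add_smul_left]; linarith
    · rw [hzx, h.inner_smul_add_smul_right]; linarith
  have hcont (w : E2) : Continuous fun z : E2 => ⟪z - x, w⟫ :=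
    (continuous_sub_right x).inner continuous_const
  obtain ⟨z, hzS, hz⟩ :=
    hS.exists_nonneg_of_forall_exists_neg_lt ((hcont u).min (hcont v)).continuousOn hnear
  exact ⟨z, hzS, le_min_iff.mp hz⟩

lemma inter_closedQuadrant_subset_openQuadrant (h : IsAxisPair θ u v) {S : Set E2} {x : E2}
    (hu : ∀ t : ℝ, x + t • u ∈ S → t < 0) (hv : ∀ t : ℝ, x + t • v ∈ S → t < 0) :
    S ∩ closedQuadrant x u v ⊆ openQuadrant x u v := by
  rintro z ⟨hzS, hzu, hzv⟩
  have hz := h.eq_inner_smul_add_inner_smul (z - x)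
  refine ⟨hzu.lt_of_ne fun h0 => ?_, hzv.lt_of_ne fun h0 => ?_⟩
  · rw [← h0, zero_smul, zero_add, sub_eq_iff_eq_add'] at hz
    linarith [hv _ (hz ▸ hzS)]
  · rw [← h0, zero_smul, add_zero, sub_eq_iff_eq_add'] at hz
    linarith [hu _ (hz ▸ hzS)]

end IsAxisPair

lemma subset_bHull (θ : ℝ) (A : Set E2) : A ⊆ BHull θ A := by
  rintro x hx _ ⟨y, C, -, hCA, rfl⟩ hxC
  exact eq_empty_iff_forall_notMem.mp hCA x ⟨hxC, hx⟩

theorem bhull_eq_self_general (S : Set E2) (hScomp : IsCompact S)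
    (hbd : IsPathConnected (frontier S))
    (θ : ℝ) (hbc : ThetaBiconvex θ S) :
    BHull θ S = S := by
  refine Subset.antisymm (fun x hx => ?_) (subset_bHull θ S)
  by_contra hxS
  obtain ⟨u, hu, hSu⟩ := exists_sign_forall_neg_of_notMem (hbc x).1 hxS
  obtain ⟨v, hv, hSv⟩ := exists_sign_forall_neg_of_notMem (hbc x).2 hxS
  have huv : IsAxisPair θ u v := ⟨hu, hv⟩
  exact not_isPreconnected_frontier hScomp.isClosed
    (huv.inter_closedQuadrant_subset_openQuadrant hSu hSv)
    (huv.inter_closedQuadrant_nonempty hScomp hx) (huv.neg.inter_closedQuadrant_nonempty hScomp hx)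
    hbd.isConnected.isPreconnected

/-- a compact regular `θ`-biconvex set coincides with its
`θ`-biconvex hull. -/
theorem bhull_eq_self (S : Set E2) (hScomp : IsCompact S)
    (hbd : IsPathConnected (frontier S)) (hreg : S = closure (interior S))
    (θ : ℝ) (hθ : θ ∈ Ico (0 : ℝ) (π / 2)) (hbc : ThetaBiconvex θ S) :
    BHull θ S = S :=
  bhull_eq_self_general S hScomp hbd θ hbc
end
end

section
/- There exists a compact set S ⊆ ℝ² that is biconvex (with respect to the canonical axes), equal to the closure of its interior, with path-connected boundary, but which is not α-convex for any α > 0 (i.e., S differs from its α-convex hull for every α > 0). -/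
noncomputable section

open Set Metric MeasureTheory Filter Real
open scoped RealInnerProductSpace Topology symmDiff

/-- The `α`-convex hull of a set: intersection of complements of all open balls
of radius `α` disjoint from the set. -/
def AlphaHull (α : ℝ) (A : Set E2) : Set E2 :=
  ⋂₀ {T | ∃ x : E2, Metric.ball x α ∩ A = ∅ ∧ T = (Metric.ball x α)ᶜ}
/-! The witness is the L-shaped set `S = [0,1] × [0,2] ∪ [0,2] × [0,1]`. Each horizontal or vertical
section of `S` is a section of one of the two rectangles, so it is convex; `S` is the union of the
closures of the interiors of these convex rectangles, and its frontier is a hexagonal polygon.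
The inward corner at `(1,1)` destroys `α`-convexity: for `ε ≤ min (1/8) (α/4)`, every open ball of
radius `α` containing `(1+ε, 1+ε) ∉ S` meets one of the two edges `{1} × [0,2]`, `[0,2] × {1}` of
`S`, so this point lies in the `α`-convex hull. -/

lemma Convex.inter_union {𝕜 E : Type*} [Semiring 𝕜] [PartialOrder 𝕜] [AddCommMonoid E]
    [Module 𝕜 E] {L A B : Set E} (hL : Convex 𝕜 L) (hA : Convex 𝕜 A) (hB : Convex 𝕜 B)
    (h : L ∩ A ⊆ B ∨ L ∩ B ⊆ A) : Convex 𝕜 (L ∩ (A ∪ B)) := by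
  rw [inter_union_distrib_left]
  rcases h with h | h
  · rw [union_eq_right.2 (subset_inter inter_subset_left h)]
    exact hL.inter hB
  · rw [union_eq_left.2 (subset_inter inter_subset_left h)]
    exact hL.inter hA

lemma eventually_add_smul_mem_of_mem_interior {E : Type*} [AddCommGroup E] [Module ℝ E]
    [TopologicalSpace E] [ContinuousAdd E] [ContinuousSMul ℝ E] {s : Set E} {x : E}
    (hx : x ∈ interior s) (v : E) : ∀ᶠ t in 𝓝 (0 : ℝ), x + t • v ∈ s :=
  (Continuous.tendsto' (by fun_prop) 0 x (by simp)).eventually (mem_interior_iff_mem_nhds.1 hx)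

lemma convex_lineThru (p v : E2) : Convex ℝ (lineThru p v) := by
  rintro _ ⟨s, rfl⟩ _ ⟨t, rfl⟩ a b ha hb hab
  refine ⟨a * s + b * t, ?_⟩
  match_scalars
  · linear_combination hab
  · ring

lemma mem_alphaHull_iff {α : ℝ} {A : Set E2} {x : E2} :
    x ∈ AlphaHull α A ↔ ∀ c, x ∈ ball c α → (ball c α ∩ A).Nonempty := by
  simp only [AlphaHull, mem_sInter, mem_ofPred_eq, forall_exists_index, and_imp]
  refine ⟨fun h c hx => nonempty_iff_ne_empty.2 fun he => h _ c he rfl hx, ?_⟩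
  rintro h _ c he rfl hx
  exact (h c hx).ne_empty he

def pt (a b : ℝ) : E2 := !₂[a, b]

@[simp] lemma pt_apply_zero (a b : ℝ) : pt a b 0 = a := rfl

@[simp] lemma pt_apply_one (a b : ℝ) : pt a b 1 = b := rfl

lemma dist_lt_iff_sq_add_sq (x y : E2) {r : ℝ} (hr : 0 < r) :
    dist x y < r ↔ (x 0 - y 0) ^ 2 + (x 1 - y 1) ^ 2 < r ^ 2 := by
  rw [EuclideanSpace.dist_eq, Real.sqrt_lt' hr, Fin.sum_univ_two, Real.dist_eq, Real.dist_eq,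
    sq_abs, sq_abs]

lemma apply_one_eq_of_mem_lineThru_bvec1 {p x : E2} (hx : x ∈ lineThru p (bvec1 0)) :
    x 1 = p 1 := by
  obtain ⟨t, rfl⟩ := hx
  simp [bvec1]

lemma apply_zero_eq_of_mem_lineThru_bvec2 {p x : E2} (hx : x ∈ lineThru p (bvec2 0)) :
    x 0 = p 0 := by
  obtain ⟨t, rfl⟩ := hx
  simp [bvec2]

def rect (a b c d : ℝ) : Set E2 := {x | x 0 ∈ Icc a b ∧ x 1 ∈ Icc c d}

def openRect (a b c d : ℝ) : Set E2 := {x | x 0 ∈ Ioo a b ∧ x 1 ∈ Ioo c d}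

section Rect

variable (a b c d : ℝ)

lemma rect_eq_preimage :
    rect a b c d = EuclideanSpace.equiv (Fin 2) ℝ ⁻¹' Icc ![a, c] ![b, d] := by
  ext x
  simp [rect, Pi.le_def, Fin.forall_fin_two]
  tauto

lemma isCompact_rect : IsCompact (rect a b c d) := by
  rw [rect_eq_preimage]
  exact (EuclideanSpace.equiv (Fin 2) ℝ).toHomeomorph.isCompact_preimage.2 isCompact_Icc

lemma convex_rect : Convex ℝ (rect a b c d) := by
  rw [rect_eq_preimage]
  exact (convex_Icc _ _).linear_preimage (EuclideanSpace.equiv (Fin 2) ℝ).toLinearMap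

lemma isOpen_openRect : IsOpen (openRect a b c d) :=
  (isOpen_Ioo.preimage (by fun_prop)).inter (isOpen_Ioo.preimage (by fun_prop))

lemma openRect_subset_rect : openRect a b c d ⊆ rect a b c d :=
  fun _ ⟨h0, h1⟩ => ⟨Ioo_subset_Icc_self h0, Ioo_subset_Icc_self h1⟩

variable {a b c d}

lemma rect_subset_closure_interior (hab : a < b) (hcd : c < d) :
    rect a b c d ⊆ closure (interior (rect a b c d)) := by
  have hint : (interior (rect a b c d)).Nonempty :=
    ⟨pt ((a + b) / 2) ((c + d) / 2), interior_maximal (openRect_subset_rect a b c d)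
      (isOpen_openRect a b c d) (by
        simp only [openRect, mem_ofPred_eq, mem_Ioo, pt_apply_zero, pt_apply_one]
        constructor <;> constructor <;> linarith)⟩
  rw [(convex_rect a b c d).closure_interior_eq_closure_of_nonempty_interior hint]
  exact subset_closure

lemma isPathConnected_rect (hab : a ≤ b) (hcd : c ≤ d) : IsPathConnected (rect a b c d) :=
  (convex_rect a b c d).isPathConnected ⟨pt a c, ⟨le_rfl, hab⟩, le_rfl, hcd⟩

end Rect

def lShape : Set E2 := rect 0 1 0 2 ∪ rect 0 2 0 1

lemma isCompact_lShape : IsCompact lShape :=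
  (isCompact_rect _ _ _ _).union (isCompact_rect _ _ _ _)

lemma biconvex_lShape : Biconvex (bvec1 0) (bvec2 0) lShape := by
  intro p
  constructor <;>
    refine (convex_lineThru _ _).inter_union (convex_rect _ _ _ _) (convex_rect _ _ _ _) ?_
  · by_cases hp : p 1 ≤ 1
    · refine Or.inl fun x ⟨hxL, ⟨h0, h1⟩, h2, _⟩ => ⟨⟨h0, by linarith⟩, h2, ?_⟩
      rw [apply_one_eq_of_mem_lineThru_bvec1 hxL]
      exact hp
    · refine Or.inr fun x ⟨hxL, _, _, h⟩ => ?_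
      rw [apply_one_eq_of_mem_lineThru_bvec1 hxL] at h
      exact absurd h hp
  · by_cases hp : p 0 ≤ 1
    · refine Or.inr fun x ⟨hxL, ⟨h0, _⟩, h1, h2⟩ => ⟨⟨h0, ?_⟩, h1, by linarith⟩
      rw [apply_zero_eq_of_mem_lineThru_bvec2 hxL]
      exact hp
    · refine Or.inl fun x ⟨hxL, ⟨_, h⟩, _⟩ => ?_
      rw [apply_zero_eq_of_mem_lineThru_bvec2 hxL] at h
      exact absurd h hp

lemma lShape_eq_closure_interior : lShape = closure (interior lShape) := by
  refine (union_subset ?_ ?_).antisymm (closure_minimal interior_subset isCompact_lShape.isClosed)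
  · exact (rect_subset_closure_interior one_pos two_pos).trans
      (closure_mono (interior_mono subset_union_left))
  · exact (rect_subset_closure_interior two_pos one_pos).trans
      (closure_mono (interior_mono subset_union_right))

lemma interior_lShape : interior lShape = openRect 0 1 0 2 ∪ openRect 0 2 0 1 := by
  refine Subset.antisymm (fun x hx => ?_) (interior_maximal
    (union_subset_union (openRect_subset_rect _ _ _ _) (openRect_subset_rect _ _ _ _))
    ((isOpen_openRect _ _ _ _).union (isOpen_openRect _ _ _ _)))
  -- Small moves along `±e₀`, `±e₁` exclude the outer edges, the move along `(1,1)` the notch.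
  have hv : ∀ v : E2, ∀ᶠ t in 𝓝[>] (0 : ℝ), x + t • v ∈ lShape :=
    fun v => nhdsWithin_le_nhds (eventually_add_smul_mem_of_mem_interior hx v)
  obtain ⟨t, ht, h₁, h₂, h₃, h₄, h₅⟩ := (eventually_mem_nhdsWithin.and <| (hv (pt 1 0)).and <|
    (hv (pt (-1) 0)).and <| (hv (pt 0 1)).and <| (hv (pt 0 (-1))).and (hv (pt 1 1))).exists
  simp only [lShape, rect, openRect, mem_union, mem_ofPred_eq, mem_Icc, mem_Ioo, PiLp.add_apply,
    PiLp.smul_apply, pt_apply_zero, pt_apply_one, smul_eq_mul] at ht h₁ h₂ h₃ h₄ h₅ ⊢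
  grind

lemma frontier_lShape : frontier lShape =
    rect 0 2 0 0 ∪ rect 2 2 0 1 ∪ rect 1 2 1 1 ∪ rect 1 1 1 2 ∪ rect 0 1 2 2 ∪ rect 0 0 0 2 := by
  rw [isCompact_lShape.isClosed.frontier_eq, interior_lShape]
  ext x
  simp only [lShape, rect, openRect, mem_union, Set.mem_sdiff, mem_ofPred_eq, mem_Icc, mem_Ioo]
  grind

lemma isPathConnected_frontier_lShape : IsPathConnected (frontier lShape) := by
  rw [frontier_lShape]
  refine ((((((isPathConnected_rect zero_le_two le_rfl).union
    (isPathConnected_rect le_rfl zero_le_one) ⟨pt 2 0, ?_⟩).union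
    (isPathConnected_rect one_le_two le_rfl) ⟨pt 2 1, ?_⟩).union
    (isPathConnected_rect le_rfl one_le_two) ⟨pt 1 1, ?_⟩).union
    (isPathConnected_rect zero_le_one le_rfl) ⟨pt 1 2, ?_⟩).union
    (isPathConnected_rect le_rfl zero_le_two) ⟨pt 0 2, ?_⟩) <;> norm_num [rect]

lemma pt_notMem_lShape {ε : ℝ} (hε : 0 < ε) : pt (1 + ε) (1 + ε) ∉ lShape := by
  rintro (⟨⟨-, h⟩, -⟩ | ⟨-, -, h⟩) <;> simp only [pt_apply_zero, pt_apply_one] at h <;> linarith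

/-- For a centre `(u, v)` beyond the notch with `u ≤ v`, the point `(1, min v 2)` of the edge
`{1} × [0,2]` is closer to it than `α` whenever `(1+ε, 1+ε)` is. -/
lemma sq_add_sq_lt_of_near_notch {u v ε α : ℝ} (hε : 0 < ε) (hε₁ : ε ≤ 1 / 8)
    (hεα : ε ≤ α / 4) (hu : 1 + ε / 2 < u) (huv : u ≤ v)
    (h : (u - (1 + ε)) ^ 2 + (v - (1 + ε)) ^ 2 < α ^ 2) :
    (u - 1) ^ 2 + (v - min v 2) ^ 2 < α ^ 2 := by
  rcases le_total v 2 with hv | hv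
  · have hu' : u - 1 - ε < 3 * α / 4 := by
      by_contra! H
      nlinarith [mul_self_le_mul_self (by linarith) H,
        mul_self_le_mul_self (by linarith) (H.trans (by linarith : u - 1 - ε ≤ v - 1 - ε))]
    rw [min_eq_left hv, sub_self]
    nlinarith
  · rw [min_eq_right hv]
    nlinarith

lemma pt_mem_alphaHull_lShape {α ε : ℝ} (hε : 0 < ε) (hε₁ : ε ≤ 1 / 8) (hεα : ε ≤ α / 4) :
    pt (1 + ε) (1 + ε) ∈ AlphaHull α lShape := by
  have hα : 0 < α := by linarith
  refine mem_alphaHull_iff.2 fun c hc => ?_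
  rw [mem_ball, dist_lt_iff_sq_add_sq _ _ hα, pt_apply_zero, pt_apply_one] at hc
  have key : ∀ y ∈ lShape, (y 0 - c 0) ^ 2 + (y 1 - c 1) ^ 2 < α ^ 2 →
      (ball c α ∩ lShape).Nonempty :=
    fun y hy h => ⟨y, by rwa [mem_ball, dist_lt_iff_sq_add_sq _ _ hα], hy⟩
  by_cases h₀ : c 0 ≤ 1 + ε / 2
  · refine key (pt 1 (1 + ε))
      (Or.inl ⟨⟨zero_le_one, le_rfl⟩, by simp; linarith, by simp; linarith⟩) ?_
    simp only [pt_apply_zero, pt_apply_one]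
    nlinarith
  by_cases h₁ : c 1 ≤ 1 + ε / 2
  · refine key (pt (1 + ε) 1)
      (Or.inr ⟨⟨by simp; linarith, by simp; linarith⟩, zero_le_one, le_rfl⟩) ?_
    simp only [pt_apply_zero, pt_apply_one]
    nlinarith
  push Not at h₀ h₁
  rcases le_total (c 0) (c 1) with h | h
  · refine key (pt 1 (min (c 1) 2)) (Or.inl ⟨⟨zero_le_one, le_rfl⟩, ?_, min_le_right _ _⟩) ?_
    · simp only [pt_apply_one]
      exact le_min (by linarith) zero_le_two
    simp only [pt_apply_zero, pt_apply_one]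
    have := sq_add_sq_lt_of_near_notch hε hε₁ hεα h₀ h (by linarith)
    nlinarith
  · refine key (pt (min (c 0) 2) 1) (Or.inr ⟨⟨?_, min_le_right _ _⟩, zero_le_one, le_rfl⟩) ?_
    · simp only [pt_apply_zero]
      exact le_min (by linarith) zero_le_two
    simp only [pt_apply_zero, pt_apply_one]
    have := sq_add_sq_lt_of_near_notch hε hε₁ hεα h₁ h (by linarith)
    nlinarith

lemma lShape_ne_alphaHull {α : ℝ} (hα : 0 < α) : lShape ≠ AlphaHull α lShape := by
  have hε : 0 < min (1 / 8 : ℝ) (α / 4) := lt_min (by norm_num) (by linarith)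
  intro h
  exact pt_notMem_lShape hε <| h ▸ pt_mem_alphaHull_lShape hε (min_le_left _ _) (min_le_right _ _)

/-- there is a compact, regular, biconvex (wrt the canonical
axes) set with path-connected boundary that is not `α`-convex for any
`α > 0`. -/
theorem exists_biconvex_not_alphaConvex :
    ∃ S : Set E2, IsCompact S ∧ Biconvex (bvec1 0) (bvec2 0) S ∧
      S = closure (interior S) ∧ IsPathConnected (frontier S) ∧
      ∀ α : ℝ, 0 < α → S ≠ AlphaHull α S :=
  ⟨lShape, isCompact_lShape, biconvex_lShape, lShape_eq_closure_interior,
    isPathConnected_frontier_lShape, fun _ => lShape_ne_alphaHull⟩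
end
end

section
/- Let S ⊆ ℝ² be compact and standard with respect to a Borel probability measure P supported on S (i.e., there exist δ, λ > 0 with P(B(x,ε) ∩ S) ≥ δ μ_L(B(x,ε)) for all x ∈ S and 0 < ε ≤ λ). If X₁, X₂, … are i.i.d. with distribution P, then d_H(S, {X₁,…,Xₙ}) → 0 almost surely as n → ∞. -/
noncomputable section

open Set Metric MeasureTheory Filter Real
open scoped RealInnerProductSpace Topology symmDiff

/-!
Standardness forces every ball centred in `S` to have positive `P`-mass, i.e. `S ⊆ supp P`.
An i.i.d. sample hits a fixed set of positive mass almost surely (it misses it up to time `n`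
with probability `(1 - p)ⁿ`), so, running over a countable basis, the sample is a.s. dense in
`supp P`. Since the sample also lies in `S`, compactness of `S` turns density into uniform
closeness: finitely many balls of radius `ε / 2` cover `S`, and each is hit by some finite time.
-/

lemma subset_support_of_measure_closedBall_le {α : Type*} [PseudoMetricSpace α]
    [MeasurableSpace α] (μ : Measure α) [μ.IsOpenPosMeasure] {P : Measure α} {S : Set α}
    {δ lam : ℝ} (hδ : 0 < δ) (hlam : 0 < lam)
    (hstd : ∀ x ∈ S, ∀ ε : ℝ, 0 < ε → ε ≤ lam →
      ENNReal.ofReal δ * μ (closedBall x ε) ≤ P (closedBall x ε ∩ S)) :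
    S ⊆ P.support := by
  intro x hx
  rw [nhds_basis_closedBall.mem_measureSupport]
  intro ε hε
  have hε' : 0 < min ε lam := lt_min hε hlam
  calc 0 < ENNReal.ofReal δ * μ (closedBall x (min ε lam)) :=
        ENNReal.mul_pos (ENNReal.ofReal_pos.2 hδ).ne' (measure_closedBall_pos μ x hε').ne'
    _ ≤ P (closedBall x (min ε lam) ∩ S) := hstd x hx _ hε' (min_le_right _ _)
    _ ≤ P (closedBall x ε) :=
        measure_mono (inter_subset_left.trans (closedBall_subset_closedBall (min_le_left _ _)))

lemma tendsto_hausdorffDist_prefix_of_subset_closure_range {α : Type*} [PseudoMetricSpace α]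
    {S : Set α} (hS : IsCompact S) {x : ℕ → α} (hxS : ∀ i, x i ∈ S) (hdense : S ⊆ closure (range x)) :
    Tendsto (fun n => hausdorffDist S {y | ∃ i < n, x i = y}) atTop (𝓝 0) := by
  have hsmall : ∀ ε > 0, ∀ᶠ n in atTop, hausdorffDist S {y | ∃ i < n, x i = y} ≤ ε := by
    intro ε hε
    obtain ⟨t, htS, htfin, hcover⟩ := hS.finite_cover_balls (half_pos hε)
    have hhit : ∀ᶠ n in atTop, ∀ c ∈ t, ∃ i < n, x i ∈ ball c (ε / 2) := by
      refine (eventually_all_finite htfin).2 fun c hc => ?_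
      obtain ⟨_, ⟨i, rfl⟩, hi⟩ := Metric.mem_closure_iff.1 (hdense (htS hc)) _ (half_pos hε)
      exact eventually_atTop.2 ⟨i + 1, fun n hn => ⟨i, by omega, mem_ball'.2 hi⟩⟩
    filter_upwards [hhit] with n hn
    refine hausdorffDist_le_of_infDist hε.le (fun s hs => ?_) ?_
    · obtain ⟨c, hc, hsc⟩ := mem_iUnion₂.1 (hcover hs)
      obtain ⟨i, hin, hic⟩ := hn c hc
      calc infDist s {y | ∃ i < n, x i = y} ≤ dist s (x i) :=
            infDist_le_dist_of_mem ⟨i, hin, rfl⟩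
        _ ≤ dist s c + dist (x i) c := dist_triangle_right _ _ _
        _ ≤ ε := by linarith [mem_ball.1 hsc, mem_ball.1 hic]
    · rintro _ ⟨i, -, rfl⟩
      exact (infDist_zero_of_mem (hxS i)).trans_le hε.le
  refine Metric.tendsto_nhds.2 fun ε hε => ?_
  filter_upwards [hsmall (ε / 2) (half_pos hε)] with n hn
  rw [Real.dist_eq, sub_zero, abs_of_nonneg hausdorffDist_nonneg]
  linarith

section

variable {Ω E : Type*} [MeasurableSpace Ω] [MeasurableSpace E] {μ : Measure Ω}
  {P : Measure E} {X : ℕ → Ω → E}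

lemma ae_exists_mem_of_iIndepFun [IsProbabilityMeasure P] (hmeas : ∀ i, Measurable (X i))
    (hdist : ∀ i, μ.map (X i) = P) (hindep : ProbabilityTheory.iIndepFun X μ)
    {B : Set E} (hB : MeasurableSet B) (hpos : 0 < P B) :
    ∀ᵐ ω ∂μ, ∃ i, X i ω ∈ B := by
  have hmiss : ∀ n : ℕ, μ (⋂ i ∈ Finset.range n, X i ⁻¹' Bᶜ) = P Bᶜ ^ n := fun n => by
    rw [hindep.measure_inter_preimage_eq_mul (Finset.range n) (sets := fun _ => Bᶜ)
      (fun _ _ => hB.compl), Finset.prod_congr rfl fun i _ => ?_, Finset.prod_const,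
      Finset.card_range]
    rw [← hdist i, Measure.map_apply (hmeas i) hB.compl]
  have hlt : P Bᶜ < 1 := by
    rw [prob_compl_eq_one_sub hB]
    exact ENNReal.sub_lt_self ENNReal.one_ne_top one_ne_zero hpos.ne'
  have hbound : ∀ n : ℕ, μ (⋂ i, X i ⁻¹' Bᶜ) ≤ P Bᶜ ^ n := fun n =>
    hmiss n ▸ measure_mono (subset_iInter₂ fun i _ => iInter_subset _ i)
  have hnull : μ (⋂ i, X i ⁻¹' Bᶜ) = 0 :=
    le_antisymm (ge_of_tendsto' (ENNReal.tendsto_pow_atTop_nhds_zero_of_lt_one hlt) hbound)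
      zero_le
  rw [ae_iff]
  convert hnull using 2
  ext ω
  simp

open TopologicalSpace in
lemma ae_support_subset_closure_range [TopologicalSpace E] [SecondCountableTopology E]
    [OpensMeasurableSpace E] [IsProbabilityMeasure P] (hmeas : ∀ i, Measurable (X i))
    (hdist : ∀ i, μ.map (X i) = P) (hindep : ProbabilityTheory.iIndepFun X μ) :
    ∀ᵐ ω ∂μ, P.support ⊆ closure (range fun i => X i ω) := by
  have hbasis := isBasis_countableBasis E
  have hhit : ∀ᵐ ω ∂μ, ∀ b ∈ {b ∈ countableBasis E | 0 < P b}, ∃ i, X i ω ∈ b :=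
    (ae_ball_iff ((countable_countableBasis E).mono (sep_subset _ _))).2 fun b hb =>
      ae_exists_mem_of_iIndepFun hmeas hdist hindep (hbasis.isOpen hb.1).measurableSet hb.2
  filter_upwards [hhit] with ω hω x hx
  rw [hbasis.mem_closure_iff]
  intro b hb hxb
  obtain ⟨i, hi⟩ := hω b ⟨hb,
    (Measure.mem_support_iff_forall x).1 hx b ((hbasis.isOpen hb).mem_nhds hxb)⟩
  exact ⟨X i ω, hi, i, rfl⟩

end

theorem hausdorffDist_sample_tendsto_zero_general {Ω : Type*} [MeasureSpace Ω]
    (P : Measure E2) [IsProbabilityMeasure P]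
    (S : Set E2) (hScomp : IsCompact S) (hsupp : P Sᶜ = 0)
    (hstd : ∃ δ > (0 : ℝ), ∃ lam > (0 : ℝ), ∀ x ∈ S, ∀ ε : ℝ, 0 < ε → ε ≤ lam →
      ENNReal.ofReal δ * volume (closedBall x ε) ≤ P (closedBall x ε ∩ S))
    (X : ℕ → Ω → E2) (hmeas : ∀ i, Measurable (X i))
    (hdist : ∀ i, Measure.map (X i) (volume : Measure Ω) = P)
    (hindep : ProbabilityTheory.iIndepFun X (volume : Measure Ω)) :
    ∀ᵐ ω : Ω, Tendsto
      (fun n : ℕ => hausdorffDist S {x : E2 | ∃ i < n, X i ω = x})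
      atTop (𝓝 0) := by
  obtain ⟨δ, hδ, lam, hlam, hstd⟩ := hstd
  have hS_support : S ⊆ P.support := subset_support_of_measure_closedBall_le volume hδ hlam hstd
  have hsample_mem : ∀ᵐ ω : Ω, ∀ i, X i ω ∈ S := ae_all_iff.2 fun i =>
    ae_of_ae_map (hmeas i).aemeasurable <| (hdist i).symm ▸ mem_ae_iff.2 hsupp
  filter_upwards [hsample_mem, ae_support_subset_closure_range hmeas hdist hindep]
    with ω hmem hdense
  exact tendsto_hausdorffDist_prefix_of_subset_closure_range hScomp hmem (hS_support.trans hdense)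

/-- for an i.i.d. sample from a probability measure `P`
supported on a compact standard set `S`, the Hausdorff distance between `S`
and the sample tends to `0` almost surely. -/
theorem hausdorffDist_sample_tendsto_zero {Ω : Type*} [MeasureSpace Ω]
    [IsProbabilityMeasure (volume : Measure Ω)]
    (P : Measure E2) [IsProbabilityMeasure P]
    (S : Set E2) (hScomp : IsCompact S) (hsupp : P Sᶜ = 0)
    (hstd : ∃ δ > (0 : ℝ), ∃ lam > (0 : ℝ), ∀ x ∈ S, ∀ ε : ℝ, 0 < ε → ε ≤ lam →
      ENNReal.ofReal δ * volume (closedBall x ε) ≤ P (closedBall x ε ∩ S))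
    (X : ℕ → Ω → E2) (hmeas : ∀ i, Measurable (X i))
    (hdist : ∀ i, Measure.map (X i) (volume : Measure Ω) = P)
    (hindep : ProbabilityTheory.iIndepFun X (volume : Measure Ω)) :
    ∀ᵐ ω : Ω, Tendsto
      (fun n : ℕ => hausdorffDist S {x : E2 | ∃ i < n, X i ω = x})
      atTop (𝓝 0) :=
  hausdorffDist_sample_tendsto_zero_general P S hScomp hsupp hstd X hmeas hdist hindep
end
end
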